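/- Let n ≥ 2, let B, B' ∈ 𝒩𝒮_n, and let α = (α_1,…,α_n) ∈ ℝ^{1×n} be such that the set {1, α_1, …, α_n} is linearly independent over ℚ; let α' ∈ ℝ^{1×n}. Let ℬ (resp. ℬ') be the (n+1)×n real matrix whose first n rows are B (resp. B') coerced to ℝ and whose last row is α (resp. α'). Suppose C is an (n+1)×(n+1) integer matrix with det C = ±1, Δ is an n×n real diagonal matrix with strictly positive diagonal entries, and P is an n×n permutation matrix, such that C·ℬ·Δ·P = ℬ'. Then, writing C in block form C = [[U, c],[r, t]] with U an n×n integer matrix, c an n×1 integer column, r a 1×n integer row, and t an integer: c = 0, det U = ±1, t = ±1, Δ = I_n, U·B·P = B', and α' = r·B·P + t·α·P; in particular α' − t·αP lies in the subgroup of ℝ^{1×n} generated by the rows of B'. -/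

import Mathlib

/-!
Look at column `k` of `C ℬ`: its entries are `m_i + c_i α_k` with integers `m_i`, and
multiplying by `δ_k` turns them into the integer entries of a column of `B'`. As `α_k` is
irrational, cross-multiplying two entries of that column gives `c_i B'_{i' j} = c_{i'} B'_{i j}`,
so a nonzero `c` would force `rank B' ≤ 1`. Once `c = 0`, `C` is block lower triangular and
`det C = det U · t`, so both factors are units. Then `U B` has primitive columns, like `B'`, and
the two differ column by column by the positive factors `δ_k`, which must therefore be `1`. The
last row of the identity then expresses `α'` in terms of `r B P` and `α P`.
-/

/-- An `n × n` integer matrix is weakly nonsingular if it has rank `n` and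
every column is unimodular (the gcd of the entries of each column is `1`). -/
def WeaklyNonsingular {n : ℕ} (B : Matrix (Fin n) (Fin n) ℤ) : Prop :=
  B.rank = n ∧ ∀ j : Fin n, Finset.univ.gcd (fun i => B i j) = 1

/-- The permutation matrix `P` with `P (k, π k) = 1` and zeros elsewhere,
over a ring `R`. -/
def permMat (R : Type) [Zero R] [One R] {n : ℕ} (π : Equiv.Perm (Fin n)) :
    Matrix (Fin n) (Fin n) R :=
  Matrix.of fun i j => if π i = j then 1 else 0

/-- The `(n+1) × n` real matrix whose first `n` rows are those of the integer
matrix `B` and whose last row is `α`. -/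
def augMat {n : ℕ} (B : Matrix (Fin n) (Fin n) ℤ) (α : Fin n → ℝ) :
    Matrix (Fin (n + 1)) (Fin n) ℝ :=
  Matrix.of (Fin.snoc (fun i j => (B i j : ℝ)) α)

open Matrix

section PermMat

variable (R : Type) {n : ℕ} (π : Equiv.Perm (Fin n))

lemma permMat_eq_permMatrix [Zero R] [One R] : permMat R π = π.permMatrix R := by
  ext i j
  simp [permMat, PEquiv.toMatrix_apply]

variable [NonAssocSemiring R]

lemma mul_permMat_apply_self {m : Type*} (X : Matrix m (Fin n) R) (i : m) (k : Fin n) :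
    (X * permMat R π) i (π k) = X i k := by
  rw [permMat_eq_permMatrix, PEquiv.mul_toMatrix_toPEquiv, submatrix_apply, id,
    Equiv.symm_apply_apply]

lemma vecMul_permMat_apply_self (x : Fin n → R) (k : Fin n) :
    (x ᵥ* permMat R π) (π k) = x k := by
  rw [permMat_eq_permMatrix, PEquiv.vecMul_toMatrix_toPEquiv, Function.comp_apply,
    Equiv.symm_apply_apply]

end PermMat

lemma irrational_of_linearIndependent_cons_one {n : ℕ} {α : Fin n → ℝ}
    (hα : LinearIndependent ℚ (Fin.cons (1 : ℝ) α : Fin (n + 1) → ℝ)) (k : Fin n) :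
    Irrational (α k) := by
  have hpair : LinearIndependent ℚ ![(1 : ℝ), α k] := by
    convert hα.comp ![0, k.succ] (by
      intro a b hab
      fin_cases a <;> fin_cases b <;> simp_all [(Fin.succ_ne_zero k).symm]) using 1
    ext i
    fin_cases i <;> simp
  rintro ⟨q, hq⟩
  exact (LinearIndependent.pair_iff' one_ne_zero).mp hpair q (by simp [hq])

theorem Irrational.mul_eq_mul_of_add_mul_mul_eq {x δ : ℝ} (hx : Irrational x) (hδ : δ ≠ 0)
    {m a p m' a' p' : ℤ} (h : (m + a * x) * δ = p) (h' : (m' + a' * x) * δ = p') :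
    a * p' = a' * p := by
  by_contra hne
  have hirr := (hx.intCast_mul (sub_ne_zero.mpr hne)).add_intCast (m * p' - m' * p)
  refine hirr.ne_zero (mul_right_cancel₀ hδ ?_)
  push_cast
  linear_combination (p' : ℝ) * h - (p : ℝ) * h'

theorem Matrix.eq_zero_of_one_lt_rank_of_mul_eq_mul {m n R : Type*} [Fintype n] [CommRing R]
    [IsDomain R] {A : Matrix m n R} (hA : 1 < A.rank) {c : m → R}
    (h : ∀ i i' j, c i * A i' j = c i' * A i j) : c = 0 := by
  by_contra hc
  obtain ⟨i, hi⟩ := Function.ne_iff.mp hc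
  have hsmul : c i • A = vecMulVec c (A i) := by
    ext i' j
    simp [vecMulVec_apply, h i i' j]
  have hrank := A.rank_smul_of_mem_nonZeroDivisors (mem_nonZeroDivisors_of_ne_zero hi)
  rw [hsmul] at hrank
  have := rank_vecMulVec_le c (A i)
  omega

theorem eq_zero_of_intCast_add_mul_mul_eq {m κ : Type*} [Fintype κ] {A M : Matrix m κ ℤ}
    (hA : 1 < A.rank) {c : m → ℤ} {x δ : κ → ℝ} (hx : ∀ k, Irrational (x k))
    (hδ : ∀ k, δ k ≠ 0) {π : Equiv.Perm κ}
    (h : ∀ i k, ((M i k : ℝ) + c i * x k) * δ k = A i (π k)) :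
    c = 0 := by
  refine A.eq_zero_of_one_lt_rank_of_mul_eq_mul hA fun i i' j => ?_
  obtain ⟨k, rfl⟩ := π.surjective j
  exact (hx k).mul_eq_mul_of_add_mul_mul_eq (hδ k) (h i k) (h i' k)

theorem Matrix.det_eq_det_submatrix_castSucc_mul {R : Type*} [CommRing R] {n : ℕ}
    (A : Matrix (Fin (n + 1)) (Fin (n + 1)) R) (h : ∀ i : Fin n, A i.castSucc (Fin.last n) = 0) :
    A.det = (A.submatrix Fin.castSucc Fin.castSucc).det * A (Fin.last n) (Fin.last n) := by
  rw [det_succ_column A (Fin.last n), Finset.sum_eq_single (Fin.last n)]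
  · simp [Fin.succAbove_last, mul_comm]
  · intro i _ hi
    obtain ⟨i, rfl⟩ := Fin.exists_castSucc_eq.mpr hi
    simp [h i]
  · simp

section ColumnGcd

variable {n R : Type*} [Fintype n] [CommRing R] [NormalizedGCDMonoid R]

theorem Matrix.gcd_col_dvd_gcd_col_mul {m : Type*} [Fintype m] (A : Matrix n m R)
    (B : Matrix m n R) (k : n) :
    (Finset.univ.gcd fun i => B i k) ∣ Finset.univ.gcd fun i => (A * B) i k :=
  Finset.dvd_gcd fun _ _ => Finset.dvd_sum fun l _ =>
    (Finset.gcd_dvd (Finset.mem_univ l)).mul_left _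

theorem Matrix.gcd_col_mul_eq_one [DecidableEq n] {U : Matrix n n R} (hU : IsUnit U.det)
    {B : Matrix n n R} {k : n} (hB : (Finset.univ.gcd fun i => B i k) = 1) :
    (Finset.univ.gcd fun i => (U * B) i k) = 1 := by
  have hdvd := gcd_col_dvd_gcd_col_mul U⁻¹ (U * B) k
  rw [nonsing_inv_mul_cancel_left U _ hU, hB] at hdvd
  rw [← Finset.normalize_gcd, normalize_eq_one]
  exact isUnit_of_dvd_one hdvd

end ColumnGcd

theorem eq_one_of_intCast_mul_eq {ι : Type*} [Fintype ι] {u v : ι → ℤ}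
    (hu : Finset.univ.gcd u = 1) (hv : Finset.univ.gcd v = 1) {δ : ℝ} (hδ : 0 < δ)
    (h : ∀ i, (u i : ℝ) * δ = v i) : δ = 1 := by
  obtain ⟨i, hi⟩ : ∃ i, u i ≠ 0 := by
    by_contra! h0
    simp [Finset.gcd_eq_zero_iff.mpr fun i _ => h0 i] at hu
  have hcross : (fun j => v i * u j) = fun j => u i * v j := by
    ext j
    have hR : (v i : ℝ) * u j = u i * v j := by rw [← h i, ← h j]; ring
    exact_mod_cast hR
  -- taking gcds of both sides of `v i • u = u i • v` gives `|v i| = |u i|`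
  have habs := congrArg (Finset.univ.gcd ·) hcross
  simp only [Finset.gcd_mul_left, hu, hv, mul_one, ← Int.abs_eq_normalize] at habs
  have hpos : 0 < (u i : ℝ) * v i := by
    rw [← h i, ← mul_assoc]
    exact mul_pos (mul_self_pos.mpr (by exact_mod_cast hi)) hδ
  rcases abs_eq_abs.mp habs with hvu | hvu
  · have hi' := h i
    rw [hvu] at hi'
    exact mul_left_cancel₀ (by exact_mod_cast hi) (hi'.trans (mul_one _).symm)
  · rw [hvu] at hpos
    push_cast at hpos
    nlinarith [mul_self_nonneg (u i : ℝ)]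

theorem Matrix.intCast_vecMul_mem_closure_range_row {m n R : Type*} [Fintype m] [Ring R]
    (A : Matrix m n ℤ) (x : m → ℤ) :
    (fun j => ((x ᵥ* A) j : R)) ∈ AddSubgroup.closure (Set.range fun i j => (A i j : R)) := by
  rw [← Submodule.span_int_eq_addSubgroupClosure, Submodule.mem_toAddSubgroup,
    Submodule.mem_span_range_iff_exists_fun]
  exact ⟨x, by ext j; simp [vecMul, dotProduct, Finset.sum_apply]⟩

lemma mul_augMat_mul_diagonal_mul_permMat_apply {n : ℕ}
    (C : Matrix (Fin (n + 1)) (Fin (n + 1)) ℤ) (B : Matrix (Fin n) (Fin n) ℤ) (α δ : Fin n → ℝ)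
    (π : Equiv.Perm (Fin n)) (i : Fin (n + 1)) (k : Fin n) :
    (C.map (Int.cast : ℤ → ℝ) * augMat B α * diagonal δ * permMat ℝ π) i (π k)
      = (((∑ l, C i l.castSucc * B l k : ℤ) : ℝ) + C i (Fin.last n) * α k) * δ k := by
  rw [mul_permMat_apply_self, mul_diagonal, mul_apply, Fin.sum_univ_castSucc]
  simp [augMat]

section BlockDecomposition

variable {n : ℕ} {B B' : Matrix (Fin n) (Fin n) ℤ} {α α' δ : Fin n → ℝ}
  {C : Matrix (Fin (n + 1)) (Fin (n + 1)) ℤ} {π : Equiv.Perm (Fin n)}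
  (heq : C.map (Int.cast : ℤ → ℝ) * augMat B α * diagonal δ * permMat ℝ π = augMat B' α')
include heq

lemma top_entry_of_mul_augMat_eq {U : Matrix (Fin n) (Fin n) ℤ}
    (hU : ∀ i j : Fin n, U i j = C i.castSucc j.castSucc) {c : Fin n → ℤ}
    (hc : ∀ i : Fin n, c i = C i.castSucc (Fin.last n)) (i k : Fin n) :
    (((U * B) i k : ℝ) + c i * α k) * δ k = B' i (π k) := by
  have := congrFun₂ heq i.castSucc (π k)
  rw [mul_augMat_mul_diagonal_mul_permMat_apply] at this
  simpa [augMat, mul_apply, hU, hc] using this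

lemma last_entry_of_mul_augMat_eq {r : Fin n → ℤ}
    (hr : ∀ j : Fin n, r j = C (Fin.last n) j.castSucc) {t : ℤ}
    (ht : t = C (Fin.last n) (Fin.last n)) (k : Fin n) :
    (((r ᵥ* B) k : ℝ) + t * α k) * δ k = α' (π k) := by
  have := congrFun₂ heq (Fin.last n) (π k)
  rw [mul_augMat_mul_diagonal_mul_permMat_apply] at this
  simpa [augMat, vecMul, dotProduct, hr, ht] using this

end BlockDecomposition

theorem stmt16 {n : ℕ} (hn : 2 ≤ n) (B B' : Matrix (Fin n) (Fin n) ℤ)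
    (hB : WeaklyNonsingular B) (hB' : WeaklyNonsingular B')
    (α α' : Fin n → ℝ)
    (hα : LinearIndependent ℚ (Fin.cons (1 : ℝ) α : Fin (n + 1) → ℝ))
    (C : Matrix (Fin (n + 1)) (Fin (n + 1)) ℤ) (hCdet : C.det = 1 ∨ C.det = -1)
    (δ : Fin n → ℝ) (hδ : ∀ i, 0 < δ i) (π : Equiv.Perm (Fin n))
    (heq : C.map (Int.cast : ℤ → ℝ) * augMat B α * Matrix.diagonal δ * permMat ℝ π
        = augMat B' α')
    (U : Matrix (Fin n) (Fin n) ℤ) (hU : ∀ i j : Fin n, U i j = C i.castSucc j.castSucc)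
    (c : Fin n → ℤ) (hc : ∀ i : Fin n, c i = C i.castSucc (Fin.last n))
    (rr : Fin n → ℤ) (hr : ∀ j : Fin n, rr j = C (Fin.last n) j.castSucc)
    (t : ℤ) (ht : t = C (Fin.last n) (Fin.last n)) :
    c = 0 ∧
    (U.det = 1 ∨ U.det = -1) ∧
    (t = 1 ∨ t = -1) ∧
    Matrix.diagonal δ = 1 ∧
    U * B * permMat ℤ π = B' ∧
    (α' = fun j => ((Matrix.vecMul rr (B * permMat ℤ π)) j : ℝ)
        + (t : ℝ) * Matrix.vecMul α (permMat ℝ π) j) ∧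
    (fun j => α' j - (t : ℝ) * Matrix.vecMul α (permMat ℝ π) j)
      ∈ AddSubgroup.closure (Set.range fun i : Fin n => fun j : Fin n => (B' i j : ℝ)) := by
  have htop := top_entry_of_mul_augMat_eq heq hU hc
  have hbot := last_entry_of_mul_augMat_eq heq hr ht
  have hc0 : c = 0 := eq_zero_of_intCast_add_mul_mul_eq (by rw [hB'.1]; omega)
    (irrational_of_linearIndependent_cons_one hα) (fun k => (hδ k).ne') htop
  have hdetC : C.det = U.det * t := by
    rw [C.det_eq_det_submatrix_castSucc_mul fun i => by simp [← hc, hc0], ← ht]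
    exact congrArg (det · * t) (Matrix.ext hU).symm
  have hUt : IsUnit (U.det * t) := Int.isUnit_iff.mpr (hdetC ▸ hCdet)
  have hU1 : IsUnit U.det := isUnit_of_mul_isUnit_left hUt
  have hδ1 : δ = fun _ => 1 := funext fun k => eq_one_of_intCast_mul_eq
    (gcd_col_mul_eq_one hU1 (hB.2 k)) (hB'.2 (π k)) (hδ k)
    fun i => by simpa [hc0] using htop i k
  have hUBP : U * B * permMat ℤ π = B' := by
    ext i j
    obtain ⟨k, rfl⟩ := π.surjective j
    rw [mul_permMat_apply_self]
    exact_mod_cast by simpa [hc0, hδ1] using htop i k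
  have hα' : α' = fun j => ((rr ᵥ* (B * permMat ℤ π)) j : ℝ) + t * (α ᵥ* permMat ℝ π) j := by
    ext j
    obtain ⟨k, rfl⟩ := π.surjective j
    simp [← hbot k, hδ1, ← vecMul_vecMul, vecMul_permMat_apply_self]
  have hBP : B * permMat ℤ π = U⁻¹ * B' := by
    rw [← hUBP, Matrix.mul_assoc, nonsing_inv_mul_cancel_left U _ hU1]
  refine ⟨hc0, Int.isUnit_iff.mp hU1, Int.isUnit_iff.mp (isUnit_of_mul_isUnit_right hUt),
    by rw [hδ1, diagonal_one], hUBP, hα', ?_⟩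
  convert B'.intCast_vecMul_mem_closure_range_row (R := ℝ) (rr ᵥ* U⁻¹) using 2 with j
  rw [hα', vecMul_vecMul, ← hBP]
  ring
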